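/- Equality of determinant expansions for distinct eigenvalues: if $\alpha_1,\dots,\alpha_n$ are pairwise distinct, then $\prod_{j=1}^n \Big( \sum_{i=1}^n (b_i - a_i)\, \alpha_j^{2n - 2i} \Big) = \sum_{\lambda \subset n \times (n-1)} m_{2\lambda}(\alpha_1,\dots,\alpha_n) \prod_{k=1}^n (b_{n-\lambda_k} - a_{n - \lambda_k})$, where $a_i, b_i$ are indeterminates, $b_\lambda$-conventions as before, and $m_{2\lambda}$ is the monomial symmetric polynomial with all parts doubled. -/

import Mathlib

/-! With `x j := α j ^ 2` and `d m := b (n - m) - a (n - m)`, the left side is the product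
`∏ⱼ ∑_{m < n} d m · x j ^ m`. Expanding it gives a sum over all exponent vectors
`f : Fin n → {0, …, n - 1}` of `x ^ f · ∏ₖ d (f k)`; the second factor only depends on the
multiset of values of `f`, so grouping the vectors by their decreasing rearrangement `λ`
collects the monomials `x ^ f` into `m_λ(x) = m_{2λ}(α)`. -/

/-- The monomial symmetric polynomial in `n` variables attached to the exponent
vector `lam : Fin n → ℕ`: the sum of all distinct monomials obtained by permuting
the exponent vector. -/
def msym {R : Type*} [CommRing R] (n : ℕ) (lam : Fin n → ℕ) (α : Fin n → R) : R :=
  ∑ v ∈ Finset.image (fun σ : Equiv.Perm (Fin n) => lam ∘ σ) Finset.univ, ∏ i, α i ^ v i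

/-- The `k`-th elementary symmetric polynomial in the `n` variables `α`. -/
def esym {R : Type*} [CommRing R] (n k : ℕ) (α : Fin n → R) : R :=
  ∑ s ∈ Finset.powersetCard k (Finset.univ : Finset (Fin n)), ∏ i ∈ s, α i

/-- The finset of partitions `λ = (λ₁ ≥ ⋯ ≥ λ_n)` with `n` parts (allowing zero parts),
each part at most `B`; i.e. partitions whose Young diagram fits in an `n × B` box,
encoded as weakly decreasing functions `Fin n → ℕ`. -/
def partsBdd (n B : ℕ) : Finset (Fin n → ℕ) :=
  ((Finset.univ : Finset (Fin n → Fin (B + 1))).filter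
      (fun f => ∀ i j : Fin n, i ≤ j → (f j : ℕ) ≤ (f i : ℕ))).image
    (fun f i => (f i : ℕ))

open Finset

section permOrbit

variable {ι α : Type*} [Fintype ι] [DecidableEq ι] [DecidableEq α]

def permOrbit (f : ι → α) : Finset (ι → α) :=
  univ.image fun σ : Equiv.Perm ι => f ∘ σ

theorem mem_permOrbit {f g : ι → α} :
    g ∈ permOrbit f ↔ ∃ σ : Equiv.Perm ι, f ∘ σ = g := by
  simp [permOrbit]

theorem self_mem_permOrbit (f : ι → α) : f ∈ permOrbit f :=
  mem_permOrbit.2 ⟨1, rfl⟩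

theorem permOrbit_eq_of_mem {f g : ι → α} (h : g ∈ permOrbit f) :
    permOrbit g = permOrbit f := by
  obtain ⟨σ, rfl⟩ := mem_permOrbit.1 h
  ext v
  simp only [mem_permOrbit]
  constructor
  · rintro ⟨τ, rfl⟩
    exact ⟨σ * τ, rfl⟩
  · rintro ⟨τ, rfl⟩
    exact ⟨σ⁻¹ * τ, by ext; simp⟩

theorem permOrbit_comp {β : Type*} [DecidableEq β] (h : α → β) (f : ι → α) :
    permOrbit (h ∘ f) = (permOrbit f).image (h ∘ ·) := by
  simp only [permOrbit, image_image]
  rfl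

theorem prod_comp_of_mem_permOrbit {M : Type*} [CommMonoid M] (φ : α → M) {f g : ι → α}
    (h : g ∈ permOrbit f) : ∏ i, φ (g i) = ∏ i, φ (f i) := by
  obtain ⟨σ, rfl⟩ := mem_permOrbit.1 h
  exact Equiv.prod_comp σ (φ ∘ f)

end permOrbit

theorem eq_of_mem_permOrbit_of_antitone {n : ℕ} {α : Type*} [PartialOrder α] [DecidableEq α]
    {f g : Fin n → α} (hf : Antitone f) (hg : Antitone g) (h : g ∈ permOrbit f) : g = f := by
  obtain ⟨σ, rfl⟩ := mem_permOrbit.1 h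
  exact Tuple.unique_antitone (σ := σ) (τ := 1) hg hf

theorem exists_antitone_comp_perm {n : ℕ} {α : Type*} [LinearOrder α] (f : Fin n → α) :
    ∃ σ : Equiv.Perm (Fin n), Antitone (f ∘ σ) :=
  ⟨Tuple.sort (OrderDual.toDual ∘ f),
    monotone_toDual_comp_iff.1 (Tuple.monotone_sort (OrderDual.toDual ∘ f))⟩

theorem mem_partsBdd {n B : ℕ} {lam : Fin n → ℕ} :
    lam ∈ partsBdd n B ↔ (∀ i, lam i ≤ B) ∧ Antitone lam := by
  constructor
  · simp only [partsBdd, mem_image, mem_filter]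
    rintro ⟨f, ⟨-, hf⟩, rfl⟩
    exact ⟨fun i => Nat.lt_succ_iff.1 (f i).2, hf⟩
  · rintro ⟨hB, hlam⟩
    simp only [partsBdd, mem_image, mem_filter]
    exact ⟨fun i => ⟨lam i, Nat.lt_succ_iff.2 (hB i)⟩,
      ⟨mem_univ _, fun i j hij => hlam hij⟩, rfl⟩

theorem piFinset_range_eq_biUnion_permOrbit (n B : ℕ) :
    Fintype.piFinset (fun _ : Fin n => range (B + 1)) = (partsBdd n B).biUnion permOrbit := by
  ext f
  simp only [mem_biUnion, Fintype.mem_piFinset, mem_range, Nat.lt_succ_iff, mem_partsBdd]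
  constructor
  · intro hf
    obtain ⟨σ, hσ⟩ := exists_antitone_comp_perm f
    refine ⟨f ∘ σ, ⟨fun i => hf (σ i), hσ⟩, mem_permOrbit.2 ⟨σ⁻¹, ?_⟩⟩
    ext; simp
  · rintro ⟨lam, ⟨hB, -⟩, hf⟩ i
    obtain ⟨σ, rfl⟩ := mem_permOrbit.1 hf
    exact hB (σ i)

theorem pairwiseDisjoint_permOrbit_partsBdd (n B : ℕ) :
    (partsBdd n B : Set (Fin n → ℕ)).PairwiseDisjoint permOrbit := by
  intro lam hlam mu hmu hne
  refine disjoint_left.2 fun w hw hw' => hne ?_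
  have hlam' := (mem_partsBdd.1 hlam).2
  have hmu' := (mem_partsBdd.1 hmu).2
  have hmu_mem : mu ∈ permOrbit lam := by
    rw [← permOrbit_eq_of_mem hw, permOrbit_eq_of_mem hw']
    exact self_mem_permOrbit mu
  exact (eq_of_mem_permOrbit_of_antitone hlam' hmu' hmu_mem).symm

theorem sum_piFinset_range_eq_sum_partsBdd {M : Type*} [AddCommMonoid M] (n B : ℕ)
    (F : (Fin n → ℕ) → M) :
    ∑ f ∈ Fintype.piFinset (fun _ : Fin n => range (B + 1)), F f
      = ∑ lam ∈ partsBdd n B, ∑ w ∈ permOrbit lam, F w := by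
  rw [piFinset_range_eq_biUnion_permOrbit, sum_biUnion (pairwiseDisjoint_permOrbit_partsBdd n B)]

section msym

variable {R : Type*} [CommRing R] {n : ℕ}

theorem msym_eq_sum_permOrbit (lam : Fin n → ℕ) (x : Fin n → R) :
    msym n lam x = ∑ v ∈ permOrbit lam, ∏ i, x i ^ v i :=
  rfl

theorem msym_const_mul {c : ℕ} (hc : c ≠ 0) (lam : Fin n → ℕ) (α : Fin n → R) :
    msym n (fun k => c * lam k) α = msym n lam (fun i => α i ^ c) := by
  have hinj : Function.Injective ((c * ·) ∘ · : (Fin n → ℕ) → Fin n → ℕ) :=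
    Function.Injective.comp_left fun _ _ h => Nat.eq_of_mul_eq_mul_left (Nat.pos_of_ne_zero hc) h
  rw [msym_eq_sum_permOrbit, msym_eq_sum_permOrbit,
    show (fun k => c * lam k) = (c * ·) ∘ lam from rfl, permOrbit_comp, sum_image hinj.injOn]
  simp only [Function.comp_apply, pow_mul]

theorem prod_sum_range_pow_eq_sum_partsBdd (B : ℕ) (d : ℕ → R) (x : Fin n → R) :
    ∏ j, ∑ m ∈ range (B + 1), d m * x j ^ m
      = ∑ lam ∈ partsBdd n B, msym n lam x * ∏ k, d (lam k) := by
  calc ∏ j, ∑ m ∈ range (B + 1), d m * x j ^ m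
      = ∑ f ∈ Fintype.piFinset (fun _ : Fin n => range (B + 1)), ∏ j, d (f j) * x j ^ f j :=
        prod_univ_sum _ _
    _ = ∑ lam ∈ partsBdd n B, ∑ w ∈ permOrbit lam, (∏ i, x i ^ w i) * ∏ k, d (w k) := by
        rw [sum_piFinset_range_eq_sum_partsBdd]
        simp only [prod_mul_distrib, mul_comm]
    _ = ∑ lam ∈ partsBdd n B, msym n lam x * ∏ k, d (lam k) := by
        refine sum_congr rfl fun lam _ => ?_
        rw [msym_eq_sum_permOrbit, sum_mul]
        exact sum_congr rfl fun w hw => by rw [prod_comp_of_mem_permOrbit d hw]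

end msym

theorem sum_Icc_one_eq_sum_range_sub {M : Type*} [AddCommMonoid M] (n : ℕ) (f : ℕ → M) :
    ∑ i ∈ Icc 1 n, f i = ∑ m ∈ range n, f (n - m) := by
  rw [← Nat.Ico_zero_eq_range, sum_Ico_reflect f 0 le_self_add, ← Ico_add_one_right_eq_Icc]
  simp

theorem gross_prasad_det_expansion_general {R : Type*} [CommRing R] (n : ℕ)
    (α : Fin n → R) (a b : ℕ → R) :
    ∏ j : Fin n, ∑ i ∈ Finset.Icc 1 n, (b i - a i) * α j ^ (2 * n - 2 * i)
      = ∑ lam ∈ partsBdd n (n - 1),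
          msym n (fun k => 2 * lam k) α *
            ∏ k : Fin n, (b (n - lam k) - a (n - lam k)) := by
  have hinner (y : R) : ∑ i ∈ Icc 1 n, (b i - a i) * y ^ (n - i)
      = ∑ m ∈ range n, (b (n - m) - a (n - m)) * y ^ m := by
    rw [sum_Icc_one_eq_sum_range_sub]
    exact sum_congr rfl fun m hm => by rw [Nat.sub_sub_self (mem_range.1 hm).le]
  simp only [msym_const_mul two_ne_zero, ← Nat.mul_sub, pow_mul, hinner]
  rcases n with _ | B
  · simp [partsBdd, msym]
  · simpa using prod_sum_range_pow_eq_sum_partsBdd B (fun m => b (B + 1 - m) - a (B + 1 - m))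
      (fun j => α j ^ 2)

/-- Expansion of the product of linear forms in the differences `bᵢ - aᵢ` with
coefficient vectors given by even powers of pairwise distinct `αⱼ`:
`∏ⱼ (∑_{i=1}^n (bᵢ - aᵢ) αⱼ^{2n-2i})
  = ∑_{λ ⊂ n × (n-1)} m_{2λ}(α) ∏ₖ (b_{n-λₖ} - a_{n-λₖ})`. -/
theorem gross_prasad_det_expansion {R : Type*} [CommRing R] (n : ℕ)
    (α : Fin n → R) (hα : Function.Injective α) (a b : ℕ → R) :
    ∏ j : Fin n, ∑ i ∈ Finset.Icc 1 n, (b i - a i) * α j ^ (2 * n - 2 * i)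
      = ∑ lam ∈ partsBdd n (n - 1),
          msym n (fun k => 2 * lam k) α *
            ∏ k : Fin n, (b (n - lam k) - a (n - lam k)) :=
  gross_prasad_det_expansion_general n α a b
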